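/- arXiv:1910.06860 — 4 statements merged into one kernel-verified Lean document; each statement's English description precedes it below -/
import Mathlib

section
/- Let α, σ, β, E(K) > 0 and define κ̂(a) = e^{-(α+σ)a}, R₀ = βE(K)/(α+σ). Then ∫₀^∞ β E(K) κ̂(a) [1 + (pσE(K)/(α+σ-β))(e^{-βa} - κ̂(a)) - (pσE(K)/(α+σ))(1 - κ̂(a)) - (pσ/(α+σ))(1 - κ̂(a))] da = R₀ (1 - pσβE(K)/(2(α+σ)(α+σ+β)) - pσ/(2(α+σ))), assuming β ≠ α+σ. -/
/-!
Writing `s = α + σ`, the integrand is a linear combination of the three decaying exponentials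
`e^{-s a}`, `e^{-(s+β) a}` and `e^{-2 s a}`, since `κ̂(a) e^{-βa} = e^{-(s+β)a}` and
`κ̂(a)² = e^{-2sa}`. Each of them integrates to the reciprocal of its rate over `(0, ∞)`, and
collecting the contributions gives the closed form. The singular factor `1 / (s - β)` disappears
because it multiplies `1/(s+β) - 1/(2s) = (s-β) / (2s(s+β))`.
-/

open Real MeasureTheory Set

lemma integral_exp_neg_mul_Ioi_zero {c : ℝ} (hc : 0 < c) :
    ∫ x in Ioi (0 : ℝ), exp (-c * x) = c⁻¹ := by
  rw [integral_exp_mul_Ioi (neg_neg_of_pos hc)]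
  simp

lemma integral_Ioi_zero_exp_combination {a b c : ℝ} (ha : 0 < a) (hb : 0 < b) (hc : 0 < c)
    (A B C : ℝ) :
    ∫ x in Ioi (0 : ℝ), (A * exp (-a * x) + B * exp (-b * x) + C * exp (-c * x)) =
      A / a + B / b + C / c := by
  have hA := (exp_neg_integrableOn_Ioi 0 ha).const_mul A
  have hB := (exp_neg_integrableOn_Ioi 0 hb).const_mul B
  have hC := (exp_neg_integrableOn_Ioi 0 hc).const_mul C
  have hAB : IntegrableOn (fun x => A * exp (-a * x) + B * exp (-b * x)) (Ioi 0) := hA.add hB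
  rw [integral_add hAB hC, integral_add hA hB, integral_const_mul, integral_const_mul,
    integral_const_mul, integral_exp_neg_mul_Ioi_zero ha, integral_exp_neg_mul_Ioi_zero hb,
    integral_exp_neg_mul_Ioi_zero hc, div_eq_mul_inv, div_eq_mul_inv, div_eq_mul_inv]

lemma tracing_integrand_eq_exp_combination (s β EK p σ a : ℝ) (hs : s ≠ 0) (hsβ : s - β ≠ 0) :
    β * EK * exp (-s * a) *
        (1 + p * σ * EK / (s - β) * (exp (-β * a) - exp (-s * a))
          - p * σ * EK / s * (1 - exp (-s * a)) - p * σ / s * (1 - exp (-s * a))) =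
      β * EK * (1 - p * σ * EK / s - p * σ / s) * exp (-s * a)
        + β * EK * (p * σ * EK / (s - β)) * exp (-(s + β) * a)
        + β * EK * (p * σ * EK / s + p * σ / s - p * σ * EK / (s - β)) * exp (-(2 * s) * a) := by
  have h₁ : exp (-(s + β) * a) = exp (-s * a) * exp (-β * a) := by
    rw [← exp_add]; ring_nf
  have h₂ : exp (-(2 * s) * a) = exp (-s * a) * exp (-s * a) := by
    rw [← exp_add]; ring_nf
  rw [h₁, h₂]
  field_simp
  ring

theorem reproduction_number_ct_general (α σ β EK p : ℝ)
    (hα : 0 < α) (hσ : 0 < σ) (hβ : 0 < β) (hne : β ≠ α + σ) :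
    (∫ a in Ioi (0:ℝ),
        β * EK * Real.exp (-(α + σ) * a) *
          (1 + p * σ * EK / (α + σ - β) *
                (Real.exp (-β * a) - Real.exp (-(α + σ) * a))
             - p * σ * EK / (α + σ) * (1 - Real.exp (-(α + σ) * a))
             - p * σ / (α + σ) * (1 - Real.exp (-(α + σ) * a)))) =
      β * EK / (α + σ) *
        (1 - p * σ * β * EK / (2 * (α + σ) * (α + σ + β)) - p * σ / (2 * (α + σ))) := by
  have hs : 0 < α + σ := add_pos hα hσ
  have hsβ : α + σ - β ≠ 0 := sub_ne_zero.mpr hne.symm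
  simp_rw [tracing_integrand_eq_exp_combination _ _ _ _ _ _ hs.ne' hsβ]
  rw [integral_Ioi_zero_exp_combination hs (add_pos hs hβ) (mul_pos two_pos hs)]
  field_simp
  ring

theorem reproduction_number_ct (α σ β EK p : ℝ)
    (hα : 0 < α) (hσ : 0 < σ) (hβ : 0 < β) (hEK : 0 < EK) (hne : β ≠ α + σ) :
    (∫ a in Ioi (0:ℝ),
        β * EK * Real.exp (-(α + σ) * a) *
          (1 + p * σ * EK / (α + σ - β) *
                (Real.exp (-β * a) - Real.exp (-(α + σ) * a))
             - p * σ * EK / (α + σ) * (1 - Real.exp (-(α + σ) * a))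
             - p * σ / (α + σ) * (1 - Real.exp (-(α + σ) * a)))) =
      β * EK / (α + σ) *
        (1 - p * σ * β * EK / (2 * (α + σ) * (α + σ + β)) - p * σ / (2 * (α + σ))) :=
  reproduction_number_ct_general α σ β EK p hα hσ hβ hne
end

section
/- Let α, σ, β_ind, p ≥ 0. In the limit β → 0, E(K) → ∞ with β(1+E(K)) → β_ind, the first-order approximation κ_o^-(a) = κ̂(a)(1 + (pσE(K)/(α+σ-β))(e^{-βa} - κ̂(a)) - (pσE(K)/(α+σ))(1 - κ̂(a))) converges pointwise to κ̂(a) - (pσβ_ind/(α+σ)) κ̂(a) (a - (1 - κ̂(a))/(α+σ)), where κ̂(a) = e^{-(α+σ)a}. -/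
/-!
Put `s = α + σ` and `κ̂ = exp (-s a)`. Over the common denominator `(s - β) s` the two correction
terms combine to `p σ E(K) β (s d(β) + 1 - κ̂) / ((s - β) s)`, where `d(β) = (exp (-β a) - 1) / β`
is the difference quotient of `β ↦ exp (-β a)` at `0`. Along the limit `E(K) β → β_ind`
(because `β → 0`), `d(β) → -a` and `s - β → s`, which gives the stated limit. When `s = 0`,
nonnegativity forces `σ = 0` and both sides equal `1`.
-/

open Real Filter Topology

lemma tendsto_mul_of_tendsto_mul_one_add {ι : Type*} {l : Filter ι} {β E : ι → ℝ} {L : ℝ}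
    (hβ : Tendsto β l (𝓝 0)) (hscale : Tendsto (fun n => β n * (1 + E n)) l (𝓝 L)) :
    Tendsto (fun n => E n * β n) l (𝓝 L) := by
  simpa using (hscale.sub hβ).congr fun n => by ring

lemma tendsto_dslope_exp_neg_mul (a : ℝ) :
    Tendsto (dslope (fun b => exp (-b * a)) 0) (𝓝 0) (𝓝 (-a)) := by
  have hderiv : HasDerivAt (fun b => exp (-b * a)) (-a) 0 := by
    simpa using ((hasDerivAt_id (0 : ℝ)).neg.mul_const a).exp
  have hcont := (continuousAt_dslope_same.2 hderiv.differentiableAt).tendsto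
  rwa [dslope_same, hderiv.deriv] at hcont

lemma div_sub_mul_sub_div_mul_one_sub {s b e d c K : ℝ} (hs : s ≠ 0) (hsb : s - b ≠ 0)
    (he : e - 1 = b * d) :
    K / (s - b) * (e - c) - K / s * (1 - c) = K * b * (s * d + (1 - c)) / ((s - b) * s) := by
  obtain rfl : e = 1 + b * d := by linarith
  field_simp
  ring

lemma tendsto_first_order_correction {ι : Type*} {l : Filter ι} {β E : ι → ℝ}
    {s a c K L : ℝ} (hs : s ≠ 0) (hβ : Tendsto β l (𝓝 0))
    (hEβ : Tendsto (fun n => E n * β n) l (𝓝 L)) :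
    Tendsto (fun n => K * E n / (s - β n) * (exp (-β n * a) - c) - K * E n / s * (1 - c)) l
      (𝓝 (K * L * (1 - c - s * a) / s ^ 2)) := by
  set d := dslope (fun b => exp (-b * a)) 0
  have hd : Tendsto (fun n => d (β n)) l (𝓝 (-a)) := (tendsto_dslope_exp_neg_mul a).comp hβ
  have hlim : Tendsto (fun n => K * (E n * β n) * (s * d (β n) + (1 - c)) / ((s - β n) * s)) l
      (𝓝 (K * L * (1 - c - s * a) / s ^ 2)) := by
    rw [show K * L * (1 - c - s * a) / s ^ 2 = K * L * (s * -a + (1 - c)) / ((s - 0) * s) by ring]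
    refine Tendsto.div ?_ ((tendsto_const_nhds.sub hβ).mul tendsto_const_nhds) (by simpa using hs)
    exact (hEβ.const_mul K).mul ((hd.const_mul s).add tendsto_const_nhds)
  have hsβ : ∀ᶠ n in l, s - β n ≠ 0 :=
    (hβ.eventually (eventually_ne_nhds hs.symm)).mono fun n hn => sub_ne_zero.2 (Ne.symm hn)
  refine hlim.congr' (hsβ.mono fun n hn => ?_)
  have he := sub_smul_dslope (fun b => exp (-b * a)) 0 (β n)
  simp only [sub_zero, smul_eq_mul, neg_zero, zero_mul, exp_zero] at he
  dsimp only
  rw [div_sub_mul_sub_div_mul_one_sub hs hn he.symm]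
  ring

theorem backward_first_order_homogeneous_limit_general (α σ βind p a : ℝ)
    (hα : 0 ≤ α) (hσ : 0 ≤ σ)
    (β EK : ℕ → ℝ)
    (hβ : Tendsto β atTop (𝓝 0))
    (hscale : Tendsto (fun n => β n * (1 + EK n)) atTop (𝓝 βind)) :
    Tendsto
      (fun n =>
        Real.exp (-(α + σ) * a) *
          (1 + p * σ * EK n / (α + σ - β n) *
                (Real.exp (-(β n) * a) - Real.exp (-(α + σ) * a))
             - p * σ * EK n / (α + σ) * (1 - Real.exp (-(α + σ) * a))))
      atTop
      (𝓝 (Real.exp (-(α + σ) * a) -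
            p * σ * βind / (α + σ) * Real.exp (-(α + σ) * a) *
              (a - (1 - Real.exp (-(α + σ) * a)) / (α + σ)))) := by
  rcases eq_or_ne (α + σ) 0 with hs | hs
  · obtain rfl : σ = 0 := by linarith
    simp
  have hcorr := tendsto_first_order_correction (K := p * σ) (c := exp (-(α + σ) * a)) (a := a) hs
    hβ (tendsto_mul_of_tendsto_mul_one_add hβ hscale)
  convert ((hcorr.const_add 1).const_mul (exp (-(α + σ) * a))) using 2
  · simp only [add_sub_assoc]
  · field_simp
    ring

theorem backward_first_order_homogeneous_limit (α σ βind p a : ℝ)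
    (hα : 0 ≤ α) (hσ : 0 ≤ σ) (hβind : 0 ≤ βind) (hp : 0 ≤ p) (ha : 0 ≤ a)
    (β EK : ℕ → ℝ)
    (hβ : Tendsto β atTop (𝓝 0))
    (hEK : Tendsto EK atTop atTop)
    (hscale : Tendsto (fun n => β n * (1 + EK n)) atTop (𝓝 βind)) :
    Tendsto
      (fun n =>
        Real.exp (-(α + σ) * a) *
          (1 + p * σ * EK n / (α + σ - β n) *
                (Real.exp (-(β n) * a) - Real.exp (-(α + σ) * a))
             - p * σ * EK n / (α + σ) * (1 - Real.exp (-(α + σ) * a))))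
      atTop
      (𝓝 (Real.exp (-(α + σ) * a) -
            p * σ * βind / (α + σ) * Real.exp (-(α + σ) * a) *
              (a - (1 - Real.exp (-(α + σ) * a)) / (α + σ)))) :=
  backward_first_order_homogeneous_limit_general α σ βind p a hα hσ β EK hβ hscale
end

section
/- Let α, σ, β_ind > 0, p ∈ [0,1], and R₀ = β_ind/(α+σ), p_obs = σ/(α+σ). Then the limit of R_ct = R₀(1 − pσβE(K)/(2(α+σ)(α+σ+β)) − pσ/(2(α+σ))) as β → 0, E(K) → ∞ with β(E(K)+1) → β_ind, equals R₀(1 − (1/2) p p_obs (R₀ + 1)). -/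
open Real Filter Topology

theorem reproduction_number_homogeneous_limit (α σ βind p : ℝ)
    (hα : 0 < α) (hσ : 0 < σ) (hβind : 0 < βind) (hp0 : 0 ≤ p) (hp1 : p ≤ 1)
    (β EK : ℕ → ℝ)
    (hβ : Tendsto β atTop (𝓝 0))
    (hEK : Tendsto EK atTop atTop)
    (hscale : Tendsto (fun n => β n * (EK n + 1)) atTop (𝓝 βind)) :
    Tendsto
      (fun n =>
        βind / (α + σ) *
          (1 - p * σ * β n * EK n / (2 * (α + σ) * (α + σ + β n))
             - p * σ / (2 * (α + σ))))
      atTop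
      (𝓝 (βind / (α + σ) *
            (1 - (1 / 2) * p * (σ / (α + σ)) * (βind / (α + σ) + 1)))) := by
  have hαs : (0:ℝ) < α + σ := by linarith
  have hβEK : Tendsto (fun n => β n * EK n) atTop (𝓝 βind) := by
    have h := hscale.sub hβ
    have heq : (fun n => β n * (EK n + 1) - β n) = fun n => β n * EK n := by
      funext n; ring
    rw [heq] at h
    simpa using h
  have hden : Tendsto (fun n => 2 * (α + σ) * (α + σ + β n)) atTop
      (𝓝 (2 * (α + σ) * (α + σ))) := by
    have : Tendsto (fun n => α + σ + β n) atTop (𝓝 (α + σ)) := by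
      simpa using (tendsto_const_nhds (x := α + σ)).add hβ
    simpa using (tendsto_const_nhds (x := 2 * (α + σ))).mul this
  have hdne : 2 * (α + σ) * (α + σ) ≠ 0 := by positivity
  have hnum : Tendsto (fun n => p * σ * β n * EK n) atTop (𝓝 (p * σ * βind)) := by
    have : Tendsto (fun n => p * σ * (β n * EK n)) atTop (𝓝 (p * σ * βind)) :=
      (tendsto_const_nhds (x := p * σ)).mul hβEK
    simpa [mul_assoc] using this
  have hfrac := hnum.div hden hdne
  have hmain : Tendsto
      (fun n =>
        βind / (α + σ) *
          (1 - p * σ * β n * EK n / (2 * (α + σ) * (α + σ + β n))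
             - p * σ / (2 * (α + σ))))
      atTop
      (𝓝 (βind / (α + σ) *
          (1 - p * σ * βind / (2 * (α + σ) * (α + σ)) - p * σ / (2 * (α + σ))))) := by
    exact (tendsto_const_nhds (x := βind / (α + σ))).mul
      (((tendsto_const_nhds (x := (1:ℝ))).sub hfrac).sub tendsto_const_nhds)
  have heq : βind / (α + σ) *
      (1 - p * σ * βind / (2 * (α + σ) * (α + σ)) - p * σ / (2 * (α + σ)))
      = βind / (α + σ) *
        (1 - (1 / 2) * p * (σ / (α + σ)) * (βind / (α + σ) + 1)) := by
    field_simp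
    ring
  rw [heq] at hmain
  exact hmain
end

section
/- Let σ, α, β > 0, p ∈ [0,1], a ≥ 0 with β ≠ α + σ, and κ̂(a) = e^{-(α+σ)a}. The first-order (in p) approximation of recursive backward tracing, κ_r^-(a) = κ̂(a)(1 + (pσE(K)/(α+σ-β))(e^{-βa} − κ̂(a)) − (pσE(K)/(α+σ))(1 − κ̂(a))), satisfies κ_r^-(a) ≤ κ̂(a) for all a ≥ 0 when p, E(K) ≥ 0. -/
open Real

lemma conv_key (s β a : ℝ) (hs : 0 < s) (hβ : 0 < β) (h : β < s) :
    s * Real.exp (-β * a) ≤ (s - β) + β * Real.exp (-s * a) := by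
  have h1 : (0:ℝ) ≤ 1 - β / s := by
    have : β / s ≤ 1 := (div_le_one hs).2 h.le
    linarith
  have h2 : (0:ℝ) ≤ β / s := by positivity
  have h3 : (1 - β / s) + β / s = 1 := by ring
  have := convexOn_exp.2 (Set.mem_univ (0:ℝ)) (Set.mem_univ (-s * a)) h1 h2 h3
  simp only [smul_eq_mul, mul_zero, zero_add, Real.exp_zero, mul_one] at this
  have hβa : β / s * (-s * a) = -β * a := by field_simp
  rw [hβa] at this
  have := mul_le_mul_of_nonneg_left this hs.le
  have hb : s * (1 - β / s + β / s * Real.exp (-s * a)) = (s - β) + β * Real.exp (-s * a) := by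
    field_simp
  linarith

lemma conv_key2 (s β a : ℝ) (hs : 0 < s) (hβ : 0 < β) (h : s < β) :
    (s - β) + β * Real.exp (-s * a) ≤ s * Real.exp (-β * a) := by
  have h1 : (0:ℝ) ≤ 1 - s / β := by
    have : s / β ≤ 1 := (div_le_one hβ).2 h.le
    linarith
  have h2 : (0:ℝ) ≤ s / β := by positivity
  have h3 : (s / β) + (1 - s / β) = 1 := by ring
  have := convexOn_exp.2 (Set.mem_univ (-β * a)) (Set.mem_univ (0:ℝ)) h2 h1 h3
  simp only [smul_eq_mul, mul_zero, add_zero, Real.exp_zero, mul_one] at this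
  have hsa : s / β * (-β * a) = -s * a := by field_simp
  rw [hsa] at this
  have := mul_le_mul_of_nonneg_left this hβ.le
  have hb : β * (s / β * Real.exp (-β * a) + (1 - s / β)) = s * Real.exp (-β * a) + (β - s) := by
    field_simp
  linarith

theorem first_order_tracing_decreases (α σ β p EK a : ℝ)
    (hσ : 0 < σ) (hα : 0 < α) (hβ : 0 < β)
    (hp0 : 0 ≤ p) (hp1 : p ≤ 1) (ha : 0 ≤ a)
    (hne : β ≠ α + σ) (hEK : 0 ≤ EK) :
    Real.exp (-(α + σ) * a) *
        (1 + p * σ * EK / (α + σ - β) *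
              (Real.exp (-β * a) - Real.exp (-(α + σ) * a))
           - p * σ * EK / (α + σ) * (1 - Real.exp (-(α + σ) * a))) ≤
      Real.exp (-(α + σ) * a) := by
  set s := α + σ with hs_def
  have hs : 0 < s := by positivity
  set C := p * σ * EK with hC_def
  have hC : 0 ≤ C := by positivity
  set X := Real.exp (-β * a) - Real.exp (-s * a) with hX
  set Y := 1 - Real.exp (-s * a) with hY
  have key : X / (s - β) ≤ Y / s := by
    rcases lt_or_gt_of_ne (Ne.symm hne) with hlt | hgt
    · -- s < β
      have hd : 0 < β - s := by linarith
      have h2 := conv_key2 s β a hs hβ hlt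
      have : X / (s - β) = (-X) / (β - s) := by
        rw [div_eq_div_iff (show s - β ≠ 0 by intro h0; linarith) (ne_of_gt hd)]; ring
      rw [this, div_le_div_iff₀ hd hs]
      simp only [hX, hY]
      nlinarith [h2]
    · -- β < s
      have hd : 0 < s - β := by linarith
      rw [div_le_div_iff₀ hd hs]
      have h1 := conv_key s β a hs hβ hgt
      simp only [hX, hY]
      nlinarith [h1]
  have hT : C / (s - β) * X - C / s * Y ≤ 0 := by
    have : C / (s - β) * X - C / s * Y = C * (X / (s - β) - Y / s) := by ring
    rw [this]
    exact mul_nonpos_of_nonneg_of_nonpos hC (by linarith)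
  have hexp : 0 < Real.exp (-s * a) := Real.exp_pos _
  nlinarith [mul_le_mul_of_nonneg_left hT hexp.le]
end
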